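/- Fix an integer r ≥ 2 and work in the field F = ℚ(P_1,…,P_r, Q_0,…,Q_{r−2}, Λ)(z) of rational functions in z over the rational function field in the parameters P_1,…,P_r, Q_0,…,Q_{r−2}, Λ. Define x := −Λ · ∏_{i=1}^{r}(P_i + z) / ∏_{i=0}^{r−2}(Q_i − z) and y := −z · ∏_{i=0}^{r−2}(Q_i − z) / (Λ · ∏_{i=1}^{r}(P_i + z)), elements of F. Then x and y satisfy the algebraic relation Σ_{i=0}^{r} (−y)^{r−i} · ( e_i(P_1,…,P_r)/(−x)^i + (−1)^r e_{i−1}(Q_0,Q_1,…,Q_{r−2})/(Λ · x^{i−1}) ) = 0, with the convention e_{−1} := 0. (This is the statement that the rational parameterization (4.6) of the paper is a parameterization of the spectral curve (4.5).) -/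

import Mathlib

open MvPolynomial

noncomputable section Stmt8

/-- The indeterminates `P_1,…,P_r`, `Q_0,…,Q_{r−2}`, `Λ` and `z`. -/
abbrev Idx (r : ℕ) : Type := Fin r ⊕ (Fin (r - 1) ⊕ Fin 2)

/-- The field `F = ℚ(P_1,…,P_r, Q_0,…,Q_{r−2}, Λ)(z)` of rational functions in the
independent indeterminates `P_1,…,P_r, Q_0,…,Q_{r−2}, Λ, z` over `ℚ`. -/
abbrev FF (r : ℕ) : Type := FractionRing (MvPolynomial (Idx r) ℚ)

/-- Embedding of the indeterminates into `F`. -/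
def par (r : ℕ) (v : Idx r) : FF r := algebraMap (MvPolynomial (Idx r) ℚ) (FF r) (X v)

/-- `P_1, …, P_r` (zero-indexed). -/
def Pv (r : ℕ) (i : Fin r) : FF r := par r (Sum.inl i)

/-- `Q_0, …, Q_{r−2}` (indexed by `Fin (r−1)`; `Q_j = Qv ⟨j⟩`). -/
def Qv (r : ℕ) (j : Fin (r - 1)) : FF r := par r (Sum.inr (Sum.inl j))

/-- `Λ`. -/
def Lam (r : ℕ) : FF r := par r (Sum.inr (Sum.inr 0))

/-- `z`. -/
def zz (r : ℕ) : FF r := par r (Sum.inr (Sum.inr 1))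

/-- The elementary symmetric polynomial `e_s(P_1,…,P_r)` evaluated in `F`. -/
def eP (r s : ℕ) : FF r :=
  ∑ t ∈ Finset.powersetCard s (Finset.univ : Finset (Fin r)), ∏ i ∈ t, Pv r i

/-- The elementary symmetric polynomial `e_s(Q_0,…,Q_{r−2})` evaluated in `F`. -/
def eQ (r s : ℕ) : FF r :=
  ∑ t ∈ Finset.powersetCard s (Finset.univ : Finset (Fin (r - 1))), ∏ j ∈ t, Qv r j

/-- The rational function `x = −Λ ∏_{i=1}^{r}(P_i + z) / ∏_{i=0}^{r−2}(Q_i − z)`. -/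
def xf (r : ℕ) : FF r :=
  -Lam r * (∏ i : Fin r, (Pv r i + zz r)) / ∏ j : Fin (r - 1), (Qv r j - zz r)

/-- The rational function `y = −z ∏_{i=0}^{r−2}(Q_i − z) / (Λ ∏_{i=1}^{r}(P_i + z))`. -/
def yf (r : ℕ) : FF r :=
  -zz r * (∏ j : Fin (r - 1), (Qv r j - zz r)) / (Lam r * ∏ i : Fin r, (Pv r i + zz r))

section SpectralCurve

open Finset

theorem Finset.prod_add_const_eq_sum_esymm {R ι : Type*} [CommSemiring R] [Fintype ι]
    (f : ι → R) (c : R) :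
    ∏ i, (f i + c) = ∑ k ∈ range (Fintype.card ι + 1),
      (∑ t ∈ powersetCard k univ, ∏ i ∈ t, f i) * c ^ (Fintype.card ι - k) := by
  have := congrArg (Polynomial.eval c)
    (Multiset.prod_X_add_C_eq_sum_esymm (univ.val.map f))
  simpa [Polynomial.eval_multiset_prod, esymm_map_val, add_comm, Polynomial.eval_prod,
    Polynomial.eval_finsetSum] using this

variable {K ι κ : Type*} [Field K] [Fintype ι] [Fintype κ]

theorem mul_pow_mul_div_inv_pow_eq {n i : ℕ} (hi : i ≤ n) (z u e : K) :
    (z * u) ^ (n - i) * (e / u⁻¹ ^ i) = e * z ^ (n - i) * u ^ n := by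
  obtain ⟨j, rfl⟩ := Nat.exists_eq_add_of_le hi
  rw [Nat.add_sub_cancel_left, inv_pow, div_inv_eq_mul, pow_add]
  ring

theorem mul_pow_mul_div_neg_inv_pow_eq {n k : ℕ} (hk : k + 1 ≤ n) (z u Λ e s : K) :
    (z * u) ^ (n - (k + 1)) * (s * e / (Λ * (-u⁻¹) ^ k)) =
      e * (-z) ^ (n - (k + 1)) * (s * (-u) ^ (n - 1) / Λ) := by
  obtain ⟨j, rfl⟩ := Nat.exists_eq_add_of_le hk
  rw [Nat.add_sub_cancel_left, show k + 1 + j - 1 = k + j by omega, neg_inv, inv_pow,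
    div_eq_mul_inv, mul_inv, inv_inv, pow_add, ← neg_mul_neg z u, mul_pow]
  ring

/- With `u = ∏ (Q_j - z) / (Λ ∏ (P_i + z))` one has `-y = z u` and `x = -u⁻¹`. By Vieta the
summands then add up to `u^n ∏ (P_i + z) - u^(n-1) ∏ (Q_j - z) / Λ`, which vanishes because
`u ∏ (P_i + z) = ∏ (Q_j - z) / Λ`. -/
theorem spectral_curve_relation {n : ℕ} (hι : Fintype.card ι = n)
    (hκ : Fintype.card κ + 1 = n) (P : ι → K) (Q : κ → K) (Λ z x y : K)
    (hP : ∏ i, (P i + z) ≠ 0)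
    (hx : x = -Λ * (∏ i, (P i + z)) / ∏ j, (Q j - z))
    (hy : y = -z * (∏ j, (Q j - z)) / (Λ * ∏ i, (P i + z))) :
    ∑ i ∈ range (n + 1), (-y) ^ (n - i) *
        ((∑ t ∈ powersetCard i univ, ∏ a ∈ t, P a) / (-x) ^ i +
          (-1 : K) ^ n *
            (if i = 0 then 0 else ∑ t ∈ powersetCard (i - 1) univ, ∏ b ∈ t, Q b) /
              (Λ * x ^ (i - 1))) = 0 := by
  set A := ∏ i, (P i + z)
  set B := ∏ j, (Q j - z)
  set u := B / (Λ * A)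
  have hy' : -y = z * u := by rw [hy]; ring
  have hx' : x = -u⁻¹ := by rw [hx, inv_div]; ring
  have hA :
      ∑ i ∈ range (n + 1),
        (∑ t ∈ powersetCard i univ, ∏ a ∈ t, P a) * z ^ (n - i) = A := by
    rw [← hι]; exact (prod_add_const_eq_sum_esymm P z).symm
  have hB :
      ∑ k ∈ range n,
        (∑ t ∈ powersetCard k univ, ∏ b ∈ t, Q b) * (-z) ^ (n - (k + 1)) = B := by
    simp only [B, sub_eq_add_neg, prod_add_const_eq_sum_esymm, ← hκ, Nat.add_sub_add_right]
  have huA : u * A = B / Λ := by rw [div_mul_eq_mul_div, mul_div_mul_right _ _ hP]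
  have hsign : (-1 : K) ^ n * (-u) ^ (n - 1) = -u ^ (n - 1) := by
    rw [← hκ, Nat.add_sub_cancel, pow_succ, mul_right_comm, ← mul_pow]; ring
  calc _ = ∑ i ∈ range (n + 1),
        ((∑ t ∈ powersetCard i univ, ∏ a ∈ t, P a) * z ^ (n - i) * u ^ n +
          (if i = 0 then 0
            else (∑ t ∈ powersetCard (i - 1) univ, ∏ b ∈ t, Q b) * (-z) ^ (n - i)) *
              ((-1) ^ n * (-u) ^ (n - 1) / Λ)) := by
        refine sum_congr rfl fun i hi => ?_
        have hin : i ≤ n := Nat.lt_succ_iff.mp (mem_range.mp hi)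
        rw [hy', hx', neg_neg, mul_add, mul_pow_mul_div_inv_pow_eq hin]
        congr 1
        rcases i with _ | k
        · simp
        · simp only [Nat.add_sub_cancel, if_neg (Nat.succ_ne_zero k)]
          exact mul_pow_mul_div_neg_inv_pow_eq hin ..
    _ = A * u ^ n + B * ((-1) ^ n * (-u) ^ (n - 1) / Λ) := by
        rw [sum_add_distrib, ← sum_mul, ← sum_mul, hA, sum_range_succ', if_pos rfl, add_zero]
        simp only [Nat.succ_ne_zero, if_false, Nat.add_sub_cancel, hB]
    _ = 0 := by
        rw [hsign, ← hκ, Nat.add_sub_cancel, pow_succ, mul_comm (u ^ _) u, ← mul_assoc,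
          mul_comm A, huA]
        ring

end SpectralCurve

theorem MvPolynomial.X_add_X_ne_zero {σ R : Type*} [CommSemiring R] [Nontrivial R] {a b : σ}
    (h : a ≠ b) : (X a + X b : MvPolynomial σ R) ≠ 0 := by
  classical
  intro h0
  simpa [h.symm] using congrArg (eval (Pi.single a 1)) h0

theorem Pv_add_zz_ne_zero (r : ℕ) (i : Fin r) : Pv r i + zz r ≠ 0 := by
  rw [Pv, zz, par, par, ← map_add]
  exact (map_ne_zero_iff _ (IsFractionRing.injective _ _)).mpr (X_add_X_ne_zero (by simp))

/-- **The rational parameterization (4.6) of the paper parameterizes the spectral curve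
(4.5).** For `r ≥ 2`, the elements `x` and `y` of `F = ℚ(P,Q,Λ)(z)` satisfy
`Σ_{i=0}^{r} (−y)^{r−i} ( e_i(P_1,…,P_r)/(−x)^i
   + (−1)^r e_{i−1}(Q_0,…,Q_{r−2})/(Λ x^{i−1}) ) = 0`,
with the convention `e_{−1} = 0` (the `if` below). -/
theorem stmt8 (r : ℕ) (hr : 2 ≤ r) :
    ∑ i ∈ Finset.range (r + 1),
        (-yf r) ^ (r - i) *
          (eP r i / (-xf r) ^ i +
            (-1 : FF r) ^ r * (if i = 0 then 0 else eQ r (i - 1)) /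
              (Lam r * xf r ^ (i - 1))) = 0 :=
  spectral_curve_relation (Fintype.card_fin r) (by rw [Fintype.card_fin]; omega) (Pv r) (Qv r)
    (Lam r) (zz r) (xf r) (yf r) (Finset.prod_ne_zero_iff.mpr fun i _ => Pv_add_zz_ne_zero r i)
    rfl rfl

end Stmt8
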